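/- arXiv:1211.5718 — 2 statements merged into one kernel-verified Lean document; each statement's English description precedes it below -/
import Mathlib

section
/- For all integers N ≥ 2 and ℓ ≥ 1 with ℓ+1 ≤ N, the chromatic number of the uncertainty graph satisfies χ(𝒰_{N,ℓ}) ≤ χ(𝒰_{N,ℓ,ℓ+1}) ≤ 4ℓ(ℓ+1)·ln N. -/
/-- δ(π,σ) for permutations of `Fin N`. -/
def permDelta {N : ℕ} (π σ : Equiv.Perm (Fin N)) : ℕ :=
  Finset.univ.sup fun i => Nat.dist (π.symm i) (σ.symm i)

/-- A permutation `π'` of `[N]` extends the `k`-subpermutation `π` if they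
agree on the first `k` coordinates. -/
def ExtendsP {N k : ℕ} (π' : Equiv.Perm (Fin N)) (π : Fin k ↪ Fin N) : Prop :=
  ∀ i : Fin k, ∀ h : (i : ℕ) < N, π' ⟨i, h⟩ = π i

/-- δ(π,σ) for `k`-subpermutations: minimum of `permDelta` over extensions. -/
noncomputable def subDelta {N k : ℕ} (π σ : Fin k ↪ Fin N) : ℕ :=
  sInf {d : ℕ | ∃ π' σ' : Equiv.Perm (Fin N),
    ExtendsP π' π ∧ ExtendsP σ' σ ∧ permDelta π' σ' = d}

lemma permDelta_comm {N : ℕ} (π σ : Equiv.Perm (Fin N)) :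
    permDelta π σ = permDelta σ π := by
  simp [permDelta, Nat.dist_comm]

lemma subDelta_comm {N k : ℕ} (π σ : Fin k ↪ Fin N) :
    subDelta π σ = subDelta σ π := by
  unfold subDelta
  congr 1
  ext d
  constructor <;> rintro ⟨a, b, h1, h2, h3⟩ <;>
    exact ⟨b, a, h2, h1, by rw [← h3, permDelta_comm]⟩

/-- The `k`-restricted uncertainty graph `𝒰_{N,ℓ,k}` on vertex set `S_{N,k}`,
the set of `k`-subpermutations of `[N]`.  For `k = N` this is the
(unrestricted) uncertainty graph `𝒰_{N,ℓ}`. -/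
noncomputable def uncGraph (N ℓ k : ℕ) : SimpleGraph (Fin k ↪ Fin N) where
  Adj π σ := (∃ h : 0 < k, π ⟨0, h⟩ ≠ σ ⟨0, h⟩) ∧ subDelta π σ ≤ ℓ
  symm := by
    constructor
    rintro π σ ⟨⟨h, hne⟩, hd⟩
    exact ⟨⟨h, hne.symm⟩, by rwa [subDelta_comm]⟩
  loopless := by constructor; rintro π ⟨⟨h, hne⟩, -⟩; exact hne rfl

/-! ### Auxiliary lemmas -/

lemma uncGraph_adj {N ℓ k : ℕ} {π σ : Fin k ↪ Fin N} :
    (uncGraph N ℓ k).Adj π σ ↔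
      (∃ h : 0 < k, π ⟨0, h⟩ ≠ σ ⟨0, h⟩) ∧ subDelta π σ ≤ ℓ := Iff.rfl

/-- Every `k`-subpermutation extends to a full permutation (when `k ≤ N`). -/
lemma exists_extendsP {N k : ℕ} (hk : k ≤ N) (π : Fin k ↪ Fin N) :
    ∃ π' : Equiv.Perm (Fin N), ExtendsP π' π := by
  classical
  let e0 : {x : Fin N // (x : ℕ) < k} ≃ Fin k :=
    { toFun := fun x => ⟨x.1.1, x.2⟩
      invFun := fun i => ⟨⟨i.1, lt_of_lt_of_le i.isLt hk⟩, i.isLt⟩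
      left_inv := fun x => Subtype.ext (Fin.ext rfl)
      right_inv := fun i => Fin.ext rfl }
  let e : {x : Fin N // (x : ℕ) < k} ≃ {x : Fin N // x ∈ Set.range ⇑π} :=
    e0.trans (Equiv.ofInjective ⇑π π.injective)
  refine ⟨e.extendSubtype, ?_⟩
  intro i h
  have hp : (((⟨(i : ℕ), h⟩ : Fin N)) : ℕ) < k := i.isLt
  rw [Equiv.extendSubtype_apply_of_mem e _ hp]
  show ((Equiv.ofInjective ⇑π π.injective) (e0 ⟨⟨(i : ℕ), h⟩, hp⟩) : Fin N) = π i
  have h1 : e0 ⟨⟨(i : ℕ), h⟩, hp⟩ = i := Fin.ext rfl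
  rw [h1]
  rfl

lemma subDelta_spec {N k : ℕ} (hk : k ≤ N) (π σ : Fin k ↪ Fin N) :
    ∃ π' σ' : Equiv.Perm (Fin N),
      ExtendsP π' π ∧ ExtendsP σ' σ ∧ permDelta π' σ' = subDelta π σ := by
  obtain ⟨π', hπ⟩ := exists_extendsP hk π
  obtain ⟨σ', hσ⟩ := exists_extendsP hk σ
  have hne : {d : ℕ | ∃ π' σ' : Equiv.Perm (Fin N),
      ExtendsP π' π ∧ ExtendsP σ' σ ∧ permDelta π' σ' = d}.Nonempty :=
    ⟨permDelta π' σ', π', σ', hπ, hσ, rfl⟩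
  exact Nat.sInf_mem hne

lemma subDelta_le_of_extends {N k : ℕ} {π σ : Fin k ↪ Fin N} {π' σ' : Equiv.Perm (Fin N)}
    (h1 : ExtendsP π' π) (h2 : ExtendsP σ' σ) : subDelta π σ ≤ permDelta π' σ' :=
  Nat.sInf_le ⟨π', σ', h1, h2, rfl⟩

/-- If `δ(π,σ) ≤ n` (for `(n+1)`-subpermutations) then the first value of `π`
appears somewhere in `σ`. -/
lemma exists_apply_eq_of_subDelta {N n : ℕ} (hk : n + 1 ≤ N) {π σ : Fin (n+1) ↪ Fin N}
    (hδ : subDelta π σ ≤ n) : ∃ j : Fin (n+1), σ j = π 0 := by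
  obtain ⟨π', σ', hπ, hσ, hd⟩ := subDelta_spec hk π σ
  have h0N : (0 : ℕ) < N := lt_of_lt_of_le (Nat.succ_pos n) hk
  have hper : permDelta π' σ' ≤ n := by rw [hd]; exact hδ
  have hsup : Nat.dist (π'.symm (π' ⟨0, h0N⟩)) (σ'.symm (π' ⟨0, h0N⟩)) ≤ n :=
    le_trans (Finset.le_sup (f := fun i => Nat.dist (π'.symm i) (σ'.symm i))
      (Finset.mem_univ (π' ⟨0, h0N⟩))) hper
  rw [Equiv.symm_apply_apply] at hsup
  have hjle : ((σ'.symm (π' ⟨0, h0N⟩) : Fin N) : ℕ) ≤ n := by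
    simpa [Nat.dist] using hsup
  refine ⟨⟨((σ'.symm (π' ⟨0, h0N⟩) : Fin N) : ℕ),
    lt_of_le_of_lt hjle (Nat.lt_succ_self n)⟩, ?_⟩
  have hlt : ((σ'.symm (π' ⟨0, h0N⟩) : Fin N) : ℕ) < N := (σ'.symm (π' ⟨0, h0N⟩)).isLt
  have h1 := hσ ⟨((σ'.symm (π' ⟨0, h0N⟩) : Fin N) : ℕ),
    lt_of_le_of_lt hjle (Nat.lt_succ_self n)⟩ hlt
  have h2 : (⟨((σ'.symm (π' ⟨0, h0N⟩) : Fin N) : ℕ), hlt⟩ : Fin N)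
      = σ'.symm (π' ⟨0, h0N⟩) := Fin.ext rfl
  rw [h2, Equiv.apply_symm_apply] at h1
  have h3 : π' ⟨(0 : ℕ), h0N⟩ = π 0 := by
    have := hπ 0 h0N
    simpa using this
  rw [← h1]
  exact h3

/-! ### The counting argument -/

/-- `ω` puts the `j`-th value of `π` strictly above all other values of `π`. -/
def HappyAt {N n : ℕ} (π : Fin (n+1) ↪ Fin N) (j : Fin (n+1))
    (ω : Equiv.Perm (Fin N)) : Prop :=
  ∀ i : Fin (n+1), i ≠ j → ω (π i) < ω (π j)

instance {N n : ℕ} (π : Fin (n+1) ↪ Fin N) (j : Fin (n+1)) :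
    DecidablePred (HappyAt π j) := fun ω => by unfold HappyAt; infer_instance

lemma happyAt_mul_swap {N n : ℕ} (π : Fin (n+1) ↪ Fin N) (a b : Fin (n+1))
    {ω : Equiv.Perm (Fin N)} (h : HappyAt π a ω) :
    HappyAt π b (ω * Equiv.swap (π a) (π b)) := by
  intro i hib
  have hb : (ω * Equiv.swap (π a) (π b)) (π b) = ω (π a) := by
    simp [Equiv.Perm.mul_apply, Equiv.swap_apply_right]
  rw [hb]
  by_cases hia : i = a
  · subst hia
    have hthis : (ω * Equiv.swap (π i) (π b)) (π i) = ω (π b) := by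
      simp [Equiv.Perm.mul_apply, Equiv.swap_apply_left]
    rw [hthis]
    exact h b (fun hEq => hib hEq.symm)
  · have hfix : Equiv.swap (π a) (π b) (π i) = π i :=
      Equiv.swap_apply_of_ne_of_ne (fun hEq => hia (π.injective hEq))
        (fun hEq => hib (π.injective hEq))
    have hthis : (ω * Equiv.swap (π a) (π b)) (π i) = ω (π i) := by
      simp [Equiv.Perm.mul_apply, hfix]
    rw [hthis]
    exact h i hia

lemma card_happyAt_eq {N n : ℕ} (π : Fin (n+1) ↪ Fin N) (j : Fin (n+1)) :
    (Finset.univ.filter (HappyAt π j)).card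
      = (Finset.univ.filter (HappyAt π 0)).card := by
  refine Finset.card_bij' (fun ω _ => ω * Equiv.swap (π j) (π 0))
    (fun ω _ => ω * Equiv.swap (π 0) (π j)) ?_ ?_ ?_ ?_
  · intro ω hω
    exact Finset.mem_filter.mpr ⟨Finset.mem_univ _,
      happyAt_mul_swap π j 0 (Finset.mem_filter.mp hω).2⟩
  · intro ω hω
    exact Finset.mem_filter.mpr ⟨Finset.mem_univ _,
      happyAt_mul_swap π 0 j (Finset.mem_filter.mp hω).2⟩
  · intro ω _
    show (ω * Equiv.swap (π j) (π 0)) * Equiv.swap (π 0) (π j) = ω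
    rw [Equiv.swap_comm (π j) (π 0), mul_assoc, Equiv.swap_mul_self, mul_one]
  · intro ω _
    show (ω * Equiv.swap (π 0) (π j)) * Equiv.swap (π j) (π 0) = ω
    rw [Equiv.swap_comm (π 0) (π j), mul_assoc, Equiv.swap_mul_self, mul_one]

lemma card_perm_eq {N n : ℕ} (π : Fin (n+1) ↪ Fin N) :
    Fintype.card (Equiv.Perm (Fin N))
      = (n+1) * (Finset.univ.filter (HappyAt π 0)).card := by
  have hcover : (Finset.univ : Finset (Equiv.Perm (Fin N))) =
      Finset.univ.biUnion (fun j : Fin (n+1) => Finset.univ.filter (HappyAt π j)) := by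
    refine Finset.Subset.antisymm ?_ (Finset.subset_univ _)
    intro ω _
    obtain ⟨j, -, hmax⟩ := Finset.exists_max_image Finset.univ (fun i => ω (π i))
      ⟨0, Finset.mem_univ 0⟩
    refine Finset.mem_biUnion.mpr ⟨j, Finset.mem_univ _,
      Finset.mem_filter.mpr ⟨Finset.mem_univ _, ?_⟩⟩
    intro i hij
    exact lt_of_le_of_ne (hmax i (Finset.mem_univ i))
      (fun hEq => hij (π.injective (ω.injective hEq)))
  have hdisj : ∀ x ∈ (Finset.univ : Finset (Fin (n+1))), ∀ y ∈ Finset.univ, x ≠ y →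
      Disjoint (Finset.univ.filter (HappyAt π x)) (Finset.univ.filter (HappyAt π y)) := by
    intro x _ y _ hxy
    rw [Finset.disjoint_left]
    intro ω hx hy
    exact lt_asymm ((Finset.mem_filter.mp hx).2 y (Ne.symm hxy))
      ((Finset.mem_filter.mp hy).2 x hxy)
  calc Fintype.card (Equiv.Perm (Fin N))
      = (Finset.univ : Finset (Equiv.Perm (Fin N))).card := Finset.card_univ.symm
    _ = ∑ j : Fin (n+1), (Finset.univ.filter (HappyAt π j)).card := by
        conv_lhs => rw [hcover]
        exact Finset.card_biUnion hdisj
    _ = ∑ _j : Fin (n+1), (Finset.univ.filter (HappyAt π 0)).card :=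
        Finset.sum_congr rfl (fun j _ => card_happyAt_eq π j)
    _ = (n+1) * (Finset.univ.filter (HappyAt π 0)).card := by
        rw [Finset.sum_const, Finset.card_univ, Fintype.card_fin, smul_eq_mul]

lemma card_filter_pi {Ω : Type*} [Fintype Ω] [DecidableEq Ω] (P : Ω → Prop)
    [DecidablePred P] (T : ℕ) :
    (Finset.univ.filter (fun F : Fin T → Ω => ∀ t, P (F t))).card =
      (Finset.univ.filter P).card ^ T := by
  rw [← Fintype.card_subtype, ← Fintype.card_subtype]
  rw [Fintype.card_congr (Equiv.subtypePiEquivPi (p := fun _ : Fin T => P))]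
  rw [Fintype.card_pi, Finset.prod_const, Finset.card_univ, Fintype.card_fin]

lemma exists_good_family {N n : ℕ} (T : ℕ)
    (hT : (Fintype.card (Fin (n+1) ↪ Fin N) : ℝ) * (((n : ℝ) / (n+1)) ^ T) < 1) :
    ∃ F : Fin T → Equiv.Perm (Fin N),
      ∀ π : Fin (n+1) ↪ Fin N, ∃ t, HappyAt π 0 (F t) := by
  by_contra hcon
  push_neg at hcon
  have hM0 : 0 < Fintype.card (Equiv.Perm (Fin N)) := Fintype.card_pos
  have hsub : (Finset.univ : Finset (Fin T → Equiv.Perm (Fin N))) ⊆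
      Finset.univ.biUnion (fun π : Fin (n+1) ↪ Fin N =>
        Finset.univ.filter (fun F : Fin T → Equiv.Perm (Fin N) =>
          ∀ t, ¬ HappyAt π 0 (F t))) := by
    intro F _
    obtain ⟨π, hπ⟩ := hcon F
    exact Finset.mem_biUnion.mpr ⟨π, Finset.mem_univ _,
      Finset.mem_filter.mpr ⟨Finset.mem_univ _, hπ⟩⟩
  have hcards : Fintype.card (Equiv.Perm (Fin N)) ^ T ≤ ∑ π : Fin (n+1) ↪ Fin N,
      (Finset.univ.filter (fun ω : Equiv.Perm (Fin N) => ¬ HappyAt π 0 ω)).card ^ T := by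
    have h1 : (Finset.univ : Finset (Fin T → Equiv.Perm (Fin N))).card
        = Fintype.card (Equiv.Perm (Fin N)) ^ T := by
      rw [Finset.card_univ, Fintype.card_fun, Fintype.card_fin]
    calc Fintype.card (Equiv.Perm (Fin N)) ^ T = _ := h1.symm
      _ ≤ (Finset.univ.biUnion (fun π : Fin (n+1) ↪ Fin N =>
            Finset.univ.filter (fun F : Fin T → Equiv.Perm (Fin N) =>
              ∀ t, ¬ HappyAt π 0 (F t)))).card := Finset.card_le_card hsub
      _ ≤ ∑ π : Fin (n+1) ↪ Fin N, (Finset.univ.filter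
            (fun F : Fin T → Equiv.Perm (Fin N) => ∀ t, ¬ HappyAt π 0 (F t))).card :=
          Finset.card_biUnion_le
      _ = _ := Finset.sum_congr rfl (fun π _ =>
          card_filter_pi (fun ω => ¬ HappyAt π 0 ω) T)
  have hbad : ∀ π : Fin (n+1) ↪ Fin N,
      ((Finset.univ.filter (fun ω : Equiv.Perm (Fin N) => ¬ HappyAt π 0 ω)).card : ℝ)
        = (n : ℝ) / ((n : ℝ) + 1) * Fintype.card (Equiv.Perm (Fin N)) := by
    intro π
    have h1 := Finset.card_filter_add_card_filter_not
      (s := (Finset.univ : Finset (Equiv.Perm (Fin N)))) (HappyAt π 0)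
    rw [Finset.card_univ] at h1
    have h2 := card_perm_eq π
    have hg : ((Finset.univ.filter (HappyAt π 0)).card : ℝ)
        + ((Finset.univ.filter (fun ω => ¬ HappyAt π 0 ω)).card : ℝ)
        = (Fintype.card (Equiv.Perm (Fin N)) : ℝ) := by exact_mod_cast h1
    have hgm : (Fintype.card (Equiv.Perm (Fin N)) : ℝ)
        = ((n : ℝ) + 1) * ((Finset.univ.filter (HappyAt π 0)).card : ℝ) := by
      exact_mod_cast h2
    have hpos : ((n : ℝ) + 1) ≠ 0 := by positivity
    rw [div_mul_eq_mul_div, eq_div_iff hpos]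
    linear_combination ((n : ℝ) + 1) * hg + hgm
  have hR : ((Fintype.card (Equiv.Perm (Fin N)) : ℝ)) ^ T
      ≤ ∑ π : Fin (n+1) ↪ Fin N,
        (((Finset.univ.filter (fun ω : Equiv.Perm (Fin N) => ¬ HappyAt π 0 ω)).card : ℝ)) ^ T := by
    exact_mod_cast hcards
  have hsum : (∑ π : Fin (n+1) ↪ Fin N,
      (((Finset.univ.filter (fun ω : Equiv.Perm (Fin N) => ¬ HappyAt π 0 ω)).card : ℝ)) ^ T)
      = (Fintype.card (Fin (n+1) ↪ Fin N) : ℝ) * (((n : ℝ) / ((n : ℝ) + 1))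
          * (Fintype.card (Equiv.Perm (Fin N)) : ℝ)) ^ T := by
    rw [Finset.sum_congr rfl (fun π _ => by rw [hbad π])]
    rw [Finset.sum_const, Finset.card_univ, nsmul_eq_mul]
  rw [hsum, mul_pow] at hR
  have hMpos : (0 : ℝ) < ((Fintype.card (Equiv.Perm (Fin N)) : ℝ)) ^ T := by
    positivity
  nlinarith [mul_lt_mul_of_pos_right hT hMpos, hR]

/-! ### Main theorem -/

/-- For `N ≥ 2`, `ℓ ≥ 1` with `ℓ+1 ≤ N`:
`χ(𝒰_{N,ℓ}) ≤ χ(𝒰_{N,ℓ,ℓ+1}) ≤ 4ℓ(ℓ+1)·ln N`.  (Here `𝒰_{N,ℓ} = 𝒰_{N,ℓ,N}`.) -/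
theorem chromaticNumber_uncGraph_le_restricted (N ℓ : ℕ)
    (hN : 2 ≤ N) (hℓ : 1 ≤ ℓ) (hℓN : ℓ + 1 ≤ N) :
    (uncGraph N ℓ N).chromaticNumber ≤ (uncGraph N ℓ (ℓ + 1)).chromaticNumber ∧
    (((uncGraph N ℓ (ℓ + 1)).chromaticNumber.toNat : ℝ)) ≤
      4 * ℓ * (ℓ + 1) * Real.log N := by
  have hNpos : (0 : ℝ) < (N : ℝ) := by positivity
  have hL2 : Real.log 2 ≤ Real.log N :=
    Real.log_le_log (by norm_num) (by exact_mod_cast hN)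
  have hlog2 : (0.6931471803 : ℝ) < Real.log 2 := Real.log_two_gt_d9
  have hL0 : (0 : ℝ) < Real.log N := lt_of_lt_of_le (by linarith) hL2
  set L : ℝ := Real.log N with hLdef
  set T : ℕ := ⌈((ℓ : ℝ) + 1) ^ 2 * L⌉₊ + 1 with hTdef
  have hTgt : ((ℓ : ℝ) + 1) ^ 2 * L < (T : ℝ) := by
    have := Nat.le_ceil (((ℓ : ℝ) + 1) ^ 2 * L)
    rw [hTdef]
    push_cast
    linarith
  -- The counting hypothesis
  have hcount : (Fintype.card (Fin (ℓ+1) ↪ Fin N) : ℝ)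
      * (((ℓ : ℝ) / ((ℓ : ℝ) + 1)) ^ T) < 1 := by
    have hcard1 : (Fintype.card (Fin (ℓ+1) ↪ Fin N) : ℝ) ≤ ((N : ℝ)) ^ (ℓ+1) := by
      have hcv : Fintype.card (Fin (ℓ+1) ↪ Fin N) = N.descFactorial (ℓ+1) := by
        rw [Fintype.card_embedding_eq, Fintype.card_fin, Fintype.card_fin]
      rw [hcv]
      exact_mod_cast Nat.descFactorial_le_pow N (ℓ+1)
    have hratio : ((ℓ : ℝ) / ((ℓ : ℝ) + 1)) ≤ Real.exp (-(1 / ((ℓ : ℝ) + 1))) := by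
      have h := Real.add_one_le_exp (-(1 / ((ℓ : ℝ) + 1)))
      have heq : -(1 / ((ℓ : ℝ) + 1)) + 1 = (ℓ : ℝ) / ((ℓ : ℝ) + 1) := by
        field_simp
        ring
      rw [heq] at h
      exact h
    have hnn : (0 : ℝ) ≤ (ℓ : ℝ) / ((ℓ : ℝ) + 1) := by positivity
    have hpow : ((ℓ : ℝ) / ((ℓ : ℝ) + 1)) ^ T
        ≤ Real.exp (-((T : ℝ) / ((ℓ : ℝ) + 1))) := by
      calc ((ℓ : ℝ) / ((ℓ : ℝ) + 1)) ^ T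
          ≤ (Real.exp (-(1 / ((ℓ : ℝ) + 1)))) ^ T := pow_le_pow_left₀ hnn hratio T
        _ = Real.exp ((T : ℕ) * (-(1 / ((ℓ : ℝ) + 1)))) := (Real.exp_nat_mul _ T).symm
        _ = Real.exp (-((T : ℝ) / ((ℓ : ℝ) + 1))) := by
            congr 1
            push_cast
            ring
    have hNpow : Real.exp (((ℓ : ℝ) + 1) * L) = ((N : ℝ)) ^ (ℓ+1) := by
      rw [hLdef]
      rw [show ((ℓ : ℝ) + 1) = ((ℓ + 1 : ℕ) : ℝ) by push_cast; ring]
      rw [Real.exp_nat_mul, Real.exp_log hNpos]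
    calc (Fintype.card (Fin (ℓ+1) ↪ Fin N) : ℝ) * (((ℓ : ℝ) / ((ℓ : ℝ) + 1)) ^ T)
        ≤ ((N : ℝ)) ^ (ℓ+1) * Real.exp (-((T : ℝ) / ((ℓ : ℝ) + 1))) := by
          apply mul_le_mul hcard1 hpow (by positivity) (by positivity)
      _ = Real.exp (((ℓ : ℝ) + 1) * L + -((T : ℝ) / ((ℓ : ℝ) + 1))) := by
          rw [Real.exp_add, hNpow]
      _ < 1 := by
          apply Real.exp_lt_one_iff.mpr
          have h5 : ((ℓ : ℝ) + 1) * L < (T : ℝ) / ((ℓ : ℝ) + 1) := by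
            rw [lt_div_iff₀ (by positivity : (0 : ℝ) < (ℓ : ℝ) + 1)]
            nlinarith [hTgt]
          linarith
  obtain ⟨F, hF⟩ := exists_good_family T hcount
  -- The proper coloring with T colors
  have hcol : (uncGraph N ℓ (ℓ+1)).Colorable T := by
    refine ⟨SimpleGraph.Coloring.mk (fun π => (hF π).choose) ?_⟩
    intro π σ hadj heq
    obtain ⟨⟨h0, hne⟩, hδ⟩ := uncGraph_adj.mp hadj
    have hz : (⟨0, h0⟩ : Fin (ℓ+1)) = 0 := by
      apply Fin.ext
      simp
    rw [hz] at hne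
    have heq' : (hF π).choose = (hF σ).choose := heq
    have Hπ : HappyAt π 0 (F ((hF π).choose)) := (hF π).choose_spec
    have Hσ : HappyAt σ 0 (F ((hF σ).choose)) := (hF σ).choose_spec
    rw [heq'] at Hπ
    obtain ⟨j, hj⟩ := exists_apply_eq_of_subDelta hℓN hδ
    have hδ' : subDelta σ π ≤ ℓ := by rwa [subDelta_comm]
    obtain ⟨j', hj'⟩ := exists_apply_eq_of_subDelta hℓN hδ'
    have hjne : j ≠ 0 := fun h => hne (by rw [h] at hj; exact hj.symm)
    have hj'ne : j' ≠ 0 := fun h => hne (by rw [h] at hj'; exact hj')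
    have h1 := Hσ j hjne
    have h2 := Hπ j' hj'ne
    rw [hj] at h1
    rw [hj'] at h2
    exact lt_asymm h1 h2
  have hle : (uncGraph N ℓ (ℓ+1)).chromaticNumber ≤ (T : ℕ∞) :=
    hcol.chromaticNumber_le
  have hne_top : (uncGraph N ℓ (ℓ+1)).chromaticNumber ≠ ⊤ :=
    ne_top_of_le_ne_top (by simp) hle
  -- Budget: T ≤ 4ℓ(ℓ+1) log N
  have hTle : (T : ℝ) ≤ 4 * (ℓ : ℝ) * ((ℓ : ℝ) + 1) * L := by
    have hceil : ((⌈((ℓ : ℝ) + 1) ^ 2 * L⌉₊ : ℝ)) < ((ℓ : ℝ) + 1) ^ 2 * L + 1 :=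
      Nat.ceil_lt_add_one (by positivity)
    have hTlt : (T : ℝ) < ((ℓ : ℝ) + 1) ^ 2 * L + 2 := by
      rw [hTdef]
      push_cast
      linarith
    have hl1 : (1 : ℝ) ≤ (ℓ : ℝ) := by exact_mod_cast hℓ
    have hA : (4 : ℝ) ≤ ((ℓ : ℝ) + 1) * (3 * (ℓ : ℝ) - 1) := by nlinarith
    have hLhalf : (1/2 : ℝ) ≤ L := by
      rw [hLdef]; linarith
    have hkey : (2 : ℝ) ≤ ((ℓ : ℝ) + 1) * (3 * (ℓ : ℝ) - 1) * L := by
      nlinarith [mul_le_mul hA hLhalf (by norm_num)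
        (by nlinarith : (0 : ℝ) ≤ ((ℓ : ℝ) + 1) * (3 * (ℓ : ℝ) - 1))]
    nlinarith [hTlt, hkey]
  constructor
  · -- Part 1: χ(𝒰_{N,ℓ}) ≤ χ(𝒰_{N,ℓ,ℓ+1}) via the restriction homomorphism
    have hcol0 : (uncGraph N ℓ (ℓ+1)).Colorable
        ((uncGraph N ℓ (ℓ+1)).chromaticNumber.toNat) :=
      SimpleGraph.colorable_chromaticNumber hcol
    obtain ⟨C⟩ := hcol0
    let emb : Fin (ℓ+1) ↪ Fin N :=
      ⟨fun i => ⟨(i : ℕ), lt_of_lt_of_le i.isLt hℓN⟩,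
        fun a b h => by
          apply Fin.ext
          have h2 := congrArg Fin.val h
          simpa using h2⟩
    have hmap : ∀ π σ : Fin N ↪ Fin N, (uncGraph N ℓ N).Adj π σ →
        (uncGraph N ℓ (ℓ+1)).Adj (emb.trans π) (emb.trans σ) := by
      intro π σ hadj
      obtain ⟨⟨h0N', hne⟩, hδ⟩ := uncGraph_adj.mp hadj
      obtain ⟨π', σ', hπ, hσ, hd⟩ := subDelta_spec (le_refl N) π σ
      refine uncGraph_adj.mpr ⟨⟨Nat.succ_pos ℓ, fun h => hne ?_⟩, ?_⟩
      · exact h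
      · have hπ' : ExtendsP π' (emb.trans π) := fun i hi => hπ (emb i) hi
        have hσ' : ExtendsP σ' (emb.trans σ) := fun i hi => hσ (emb i) hi
        have hsd := subDelta_le_of_extends hπ' hσ'
        rw [hd] at hsd
        exact le_trans hsd hδ
    have hcolN : (uncGraph N ℓ N).Colorable
        ((uncGraph N ℓ (ℓ+1)).chromaticNumber.toNat) :=
      ⟨SimpleGraph.Coloring.mk (fun π => C (emb.trans π))
        (fun hadj => C.valid (hmap _ _ hadj))⟩
    have := hcolN.chromaticNumber_le
    rwa [ENat.coe_toNat hne_top] at this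
  · -- Part 2: the numeric bound
    have h8 : (((uncGraph N ℓ (ℓ+1)).chromaticNumber.toNat : ℕ∞))
        = (uncGraph N ℓ (ℓ+1)).chromaticNumber := ENat.coe_toNat hne_top
    have h9 : (((uncGraph N ℓ (ℓ+1)).chromaticNumber.toNat : ℕ∞)) ≤ (T : ℕ∞) := by
      rw [h8]; exact hle
    have h10 : (uncGraph N ℓ (ℓ+1)).chromaticNumber.toNat ≤ T := by
      exact_mod_cast h9
    calc (((uncGraph N ℓ (ℓ+1)).chromaticNumber.toNat : ℕ) : ℝ) ≤ (T : ℝ) := by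
          exact_mod_cast h10
      _ ≤ 4 * (ℓ : ℝ) * ((ℓ : ℝ) + 1) * L := hTle
end

section
/- For all integers N and k with 1 ≤ k < N, the restricted uncertainty graph 𝒰_{N,2,k} contains a subgraph isomorphic to the shift graph 𝒮_{N,k}; consequently χ(𝒰_{N,2,k}) ≥ χ(𝒮_{N,k}). -/
/-- `π` is a left shift of `σ`: `π(i) = σ(i+1)` for all `i ∈ [k−1]` and
`π(k) ≠ σ(1)`. -/
def IsLeftShift {N k : ℕ} (π σ : Fin k ↪ Fin N) : Prop :=
  (∀ i : Fin k, ∀ h : (i : ℕ) + 1 < k, π i = σ ⟨(i : ℕ) + 1, h⟩) ∧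
  ∃ h : 0 < k, π ⟨k - 1, Nat.sub_lt h Nat.one_pos⟩ ≠ σ ⟨0, h⟩

lemma not_isLeftShift_self {N k : ℕ} (π : Fin k ↪ Fin N) : ¬ IsLeftShift π π := by
  rintro ⟨h1, hk, hne⟩
  rcases Nat.lt_or_ge 1 k with h2 | h2
  · have := h1 ⟨0, hk⟩ (by simpa using h2)
    have := π.injective this
    simp [Fin.ext_iff] at this
  · exact hne (by congr 1; omega)

/-- The shift graph `𝒮_{N,k}` on the set `S_{N,k}` of `k`-subpermutations:
`π ~ σ` iff `π` is a (left or right) shift of `σ`. -/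
def shiftGraph (N k : ℕ) : SimpleGraph (Fin k ↪ Fin N) where
  Adj π σ := IsLeftShift π σ ∨ IsLeftShift σ π
  symm := by constructor; rintro π σ (h | h) <;> [exact Or.inr h; exact Or.inl h]
  loopless := by constructor; rintro π (h | h) <;> exact not_isLeftShift_self π h


/-- position sequence: zigzag. -/
private def pFun (k m : ℕ) : ℕ := if 2*m < k then k - 1 - 2*m else 2*m - k

private lemma pFun_lt {k m : ℕ} (hm : m < k) : pFun k m < k := by
  unfold pFun; split <;> omega

private lemma pFun_inj {k a b : ℕ} (ha : a < k) (hb : b < k)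
    (h : pFun k a = pFun k b) : a = b := by
  unfold pFun at h; split_ifs at h <;> omega

private lemma pFun_zero {k : ℕ} (hk : 0 < k) : pFun k 0 = k - 1 := by
  unfold pFun; split <;> omega

private lemma pFun_dist_succ {k m : ℕ} (h : m + 1 < k) :
    Nat.dist (pFun k (m+1)) (pFun k m) ≤ 2 := by
  simp only [Nat.dist]; unfold pFun; split_ifs <;> omega

private lemma pFun_dist_last {k : ℕ} (hk : 0 < k) :
    Nat.dist k (pFun k (k-1)) ≤ 2 := by
  simp only [Nat.dist]; unfold pFun; split_ifs <;> omega

private noncomputable def gEquiv (k : ℕ) : Fin k ≃ Fin k :=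
  Equiv.ofBijective (fun m => ⟨pFun k m.1, pFun_lt m.2⟩)
    (Finite.injective_iff_bijective.mp fun a b hab =>
      Fin.ext (pFun_inj a.2 b.2 (congrArg Fin.val hab)))

private lemma gEquiv_apply {k : ℕ} (m : Fin k) : ((gEquiv k m : Fin k) : ℕ) = pFun k m.1 := rfl

private lemma pFun_gEquiv_symm {k : ℕ} (j : Fin k) : pFun k ((gEquiv k).symm j).1 = j.1 :=
  congrArg Fin.val ((gEquiv k).apply_symm_apply j)

private lemma gEquiv_symm_eq {k : ℕ} {j : Fin k} {m : ℕ} (hm : m < k)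
    (h : pFun k m = j.1) : (gEquiv k).symm j = ⟨m, hm⟩ := by
  rw [Equiv.symm_apply_eq]
  exact Fin.ext (by simpa [gEquiv_apply] using h.symm)

/-- the subgraph map. -/
private noncomputable def fMap {N k : ℕ} (π : Fin k ↪ Fin N) : Fin k ↪ Fin N :=
  (gEquiv k).symm.toEmbedding.trans π

private lemma fMap_apply {N k : ℕ} (π : Fin k ↪ Fin N) (j : Fin k) :
    fMap π j = π ((gEquiv k).symm j) := rfl

private lemma fMap_injective {N k : ℕ} : Function.Injective (fMap (N := N) (k := k)) := by
  intro π σ h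
  ext i
  have := congrArg (fun (e : Fin k ↪ Fin N) => e (gEquiv k i)) h
  have h2 : π i = σ i := by simpa [fMap_apply, Equiv.symm_apply_apply] using this
  exact congrArg Fin.val h2

private lemma exists_perm_extend {N m : ℕ} (h : m ≤ N) (e : Fin m ↪ Fin N) :
    ∃ P : Equiv.Perm (Fin N), ∀ i : ℕ, ∀ hi : i < m, ∀ hN : i < N, P ⟨i, hN⟩ = e ⟨i, hi⟩ := by
  classical
  let eq1 : {x : Fin N // (x : ℕ) < m} ≃ Fin m :=
    { toFun := fun x => ⟨x.1.1, x.2⟩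
      invFun := fun i => ⟨⟨i.1, lt_of_lt_of_le i.2 h⟩, i.2⟩
      left_inv := fun x => rfl
      right_inv := fun i => rfl }
  let eq2 : Fin m ≃ {y : Fin N // y ∈ Set.range e} := Equiv.ofInjective e e.injective
  refine ⟨(eq1.trans eq2).extendSubtype, fun i hi hN => ?_⟩
  rw [Equiv.extendSubtype_apply_of_mem (eq1.trans eq2) ⟨i, hN⟩ hi]
  simp [eq1, eq2]
private noncomputable def rFun {N k : ℕ} (hkN : k < N) (j : Fin N) : Fin N :=
  if hj : (j : ℕ) < k then
    if hm : (((gEquiv k).symm ⟨j.1, hj⟩ : Fin k) : ℕ) + 1 < k then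
      ⟨pFun k ((((gEquiv k).symm ⟨j.1, hj⟩ : Fin k) : ℕ) + 1), lt_trans (pFun_lt hm) hkN⟩
    else ⟨k, hkN⟩
  else if (j : ℕ) = k then ⟨k - 1, Nat.lt_of_le_of_lt (Nat.sub_le k 1) hkN⟩ else j

private lemma rFun_spec {N k : ℕ} (hkN : k < N) (j : Fin N) :
    ((j : ℕ) < k ∧ ∃ m : ℕ, m < k ∧ pFun k m = j.1 ∧
        ((m + 1 < k ∧ (rFun hkN j : ℕ) = pFun k (m+1)) ∨
         (m = k - 1 ∧ (rFun hkN j : ℕ) = k)))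
    ∨ ((j : ℕ) = k ∧ (rFun hkN j : ℕ) = k - 1)
    ∨ ((j : ℕ) > k ∧ rFun hkN j = j) := by
  unfold rFun
  by_cases hj : (j : ℕ) < k
  · left
    refine ⟨hj, (((gEquiv k).symm ⟨j.1, hj⟩ : Fin k) : ℕ), Fin.is_lt _, pFun_gEquiv_symm _, ?_⟩
    by_cases hm : (((gEquiv k).symm ⟨j.1, hj⟩ : Fin k) : ℕ) + 1 < k
    · exact Or.inl ⟨hm, by rw [dif_pos hj, dif_pos hm]⟩
    · refine Or.inr ⟨by have := Fin.is_lt ((gEquiv k).symm ⟨j.1, hj⟩); omega,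
        by rw [dif_pos hj, dif_neg hm]⟩
  · right
    by_cases hj2 : (j : ℕ) = k
    · exact Or.inl ⟨hj2, by rw [dif_neg hj, if_pos hj2]⟩
    · exact Or.inr ⟨by omega, by rw [dif_neg hj, if_neg hj2]⟩

private lemma rFun_dist {N k : ℕ} (hk : 1 ≤ k) (hkN : k < N) (j : Fin N) :
    Nat.dist (rFun hkN j) j ≤ 2 := by
  rcases rFun_spec hkN j with ⟨hj, m, hm, hpm, (⟨h1, h2⟩ | ⟨h1, h2⟩)⟩ | ⟨hj, h2⟩ | ⟨hj, h2⟩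
  · rw [h2, ← hpm]; exact pFun_dist_succ h1
  · rw [h2, ← hpm, h1]; exact pFun_dist_last (by omega)
  · rw [h2, hj]; simp [Nat.dist]; omega
  · rw [h2]; simp [Nat.dist]

private lemma rFun_injective {N k : ℕ} (hk : 1 ≤ k) (hkN : k < N) :
    Function.Injective (rFun hkN) := by
  intro a b hab
  have hvab : (rFun hkN a : ℕ) = (rFun hkN b : ℕ) := congrArg Fin.val hab
  apply Fin.ext
  rcases rFun_spec hkN a with ⟨hja, ma, hma, hpma, (⟨ha1, ha2⟩ | ⟨ha1, ha2⟩)⟩ | ⟨hja, ha2⟩ | ⟨hja, ha2⟩ <;>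
    rcases rFun_spec hkN b with ⟨hjb, mb, hmb, hpmb, (⟨hb1, hb2⟩ | ⟨hb1, hb2⟩)⟩ | ⟨hjb, hb2⟩ | ⟨hjb, hb2⟩
  -- case A-A
  · have h3 : ma = mb := by have := pFun_inj ha1 hb1 (by omega); omega
    rw [← hpma, ← hpmb, h3]
  -- A-B
  · have := pFun_lt ha1; omega
  -- A-C : pFun k (ma+1) = k-1 = pFun k 0
  · have h0 : pFun k 0 = k - 1 := pFun_zero (by omega)
    have := pFun_inj ha1 (show 0 < k by omega) (by omega)
    omega
  -- A-D : value < k < b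
  · have := pFun_lt ha1
    have hb3 : (rFun hkN b : ℕ) = b.1 := congrArg Fin.val hb2
    omega
  -- B-A
  · have := pFun_lt hb1; omega
  -- B-B
  · rw [← hpma, ← hpmb, ha1, hb1]
  -- B-C
  · omega
  -- B-D
  · have hb3 : (rFun hkN b : ℕ) = b.1 := congrArg Fin.val hb2
    omega
  -- C-A
  · have h0 : pFun k 0 = k - 1 := pFun_zero (by omega)
    have := pFun_inj hb1 (show 0 < k by omega) (by omega)
    omega
  -- C-B
  · omega
  -- C-C
  · omega
  -- C-D
  · have hb3 : (rFun hkN b : ℕ) = b.1 := congrArg Fin.val hb2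
    omega
  -- D-A
  · have := pFun_lt hb1
    have ha3 : (rFun hkN a : ℕ) = a.1 := congrArg Fin.val ha2
    omega
  -- D-B
  · have ha3 : (rFun hkN a : ℕ) = a.1 := congrArg Fin.val ha2
    omega
  -- D-C
  · have ha3 : (rFun hkN a : ℕ) = a.1 := congrArg Fin.val ha2
    omega
  -- D-D
  · have ha3 : (rFun hkN a : ℕ) = a.1 := congrArg Fin.val ha2
    have hb3 : (rFun hkN b : ℕ) = b.1 := congrArg Fin.val hb2
    omega
private lemma permDelta_trans_le {N : ℕ} (S ρ : Equiv.Perm (Fin N))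
    (h : ∀ j : Fin N, Nat.dist (ρ j) j ≤ 2) : permDelta (ρ.trans S) S ≤ 2 := by
  apply Finset.sup_le
  intro i _
  have h2 := h (ρ.symm (S.symm i))
  rw [Equiv.apply_symm_apply] at h2
  have h3 : ((ρ.trans S).symm i : Fin N) = ρ.symm (S.symm i) := rfl
  rw [h3, Nat.dist_comm]
  exact h2

private lemma adj_of_leftShift {N k : ℕ} (hk : 1 ≤ k) (hkN : k < N)
    {π σ : Fin k ↪ Fin N} (hs : IsLeftShift π σ) :
    (uncGraph N 2 k).Adj (fMap π) (fMap σ) := by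
  obtain ⟨h1, hk0, hne⟩ := hs
  have hπnot : ∀ j : Fin k, π ⟨k - 1, Nat.sub_lt hk0 Nat.one_pos⟩ ≠ σ j := by
    intro j heq
    rcases Nat.eq_zero_or_pos j.1 with hj0 | hj0
    · exact hne (by rwa [show (⟨0, hk0⟩ : Fin k) = j from Fin.ext hj0.symm])
    · have hlt : (j.1 - 1 : ℕ) + 1 < k := by have := j.2; omega
      have h2 : π ⟨j.1 - 1, by omega⟩ = σ ⟨j.1 - 1 + 1, hlt⟩ := h1 ⟨j.1 - 1, by omega⟩ hlt
      have h3 : σ ⟨j.1 - 1 + 1, hlt⟩ = σ j := by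
        congr 1
        exact Fin.ext (by simp; omega)
      have h4 := π.injective (heq.trans (h2.trans h3).symm)
      have h5 := congrArg Fin.val h4
      simp only [] at h5
      have := j.2
      omega
  refine ⟨⟨hk0, ?_⟩, ?_⟩
  · -- first coordinates differ
    rw [fMap_apply, fMap_apply]
    by_cases hm : (((gEquiv k).symm ⟨0, hk0⟩ : Fin k) : ℕ) + 1 < k
    · rw [h1 _ hm]
      intro heq
      have h6 := congrArg Fin.val (σ.injective heq)
      simp only [] at h6
      omega
    · have hval : (((gEquiv k).symm ⟨0, hk0⟩ : Fin k) : ℕ) = k - 1 := by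
        have := Fin.is_lt ((gEquiv k).symm ⟨0, hk0⟩); omega
      intro heq
      apply hπnot ((gEquiv k).symm ⟨0, hk0⟩)
      rw [show (⟨k - 1, Nat.sub_lt hk0 Nat.one_pos⟩ : Fin k) = (gEquiv k).symm ⟨0, hk0⟩ from
        Fin.ext hval.symm]
      exact heq
  · -- subDelta bound
    have hk1N : k + 1 ≤ N := hkN
    have hEinj : Function.Injective
        (fun j : Fin (k+1) => if hj : (j : ℕ) < k then fMap σ ⟨j.1, hj⟩
          else π ⟨k - 1, Nat.sub_lt hk0 Nat.one_pos⟩) := by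
      intro a b hab
      simp only [] at hab
      split_ifs at hab with ha' hb' hb'
      · have h7 := congrArg Fin.val ((fMap σ).injective hab)
        exact Fin.ext h7
      · exact absurd hab.symm (hπnot _)
      · exact absurd hab (hπnot _)
      · exact Fin.ext (by have := a.2; have := b.2; omega)
    obtain ⟨S, hS⟩ := exists_perm_extend hk1N ⟨_, hEinj⟩
    have hSlt : ∀ i : ℕ, ∀ hi : i < k, ∀ hN : i < N, S ⟨i, hN⟩ = fMap σ ⟨i, hi⟩ := by
      intro i hi hN
      rw [hS i (by omega) hN]
      simp only [Function.Embedding.coeFn_mk]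
      rw [dif_pos hi]
    have hSk : S ⟨k, hkN⟩ = π ⟨k - 1, Nat.sub_lt hk0 Nat.one_pos⟩ := by
      rw [hS k (by omega) hkN]
      simp only [Function.Embedding.coeFn_mk]
      rw [dif_neg (by simp)]
    have hSext : ExtendsP S (fMap σ) := by
      intro i hiN
      rw [hSlt i.1 i.2 hiN]
    let ρ : Equiv.Perm (Fin N) :=
      Equiv.ofBijective (rFun hkN) (Finite.injective_iff_bijective.mp (rFun_injective hk hkN))
    have hρ : ∀ j : Fin N, ρ j = rFun hkN j := fun _ => rfl
    have hPext : ExtendsP (ρ.trans S) (fMap π) := by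
      intro i hiN
      have hjlt : ((⟨i.1, hiN⟩ : Fin N) : ℕ) < k := i.2
      rcases rFun_spec hkN ⟨i.1, hiN⟩ with ⟨hj, m, hm, hpm, hsub⟩ | ⟨hj, -⟩ | ⟨hj, -⟩
      · have hgsymm : (gEquiv k).symm i = ⟨m, hm⟩ := by
          have : pFun k m = i.1 := hpm
          exact gEquiv_symm_eq hm this
        have hfπ : fMap π i = π ⟨m, hm⟩ := by rw [fMap_apply, hgsymm]
        have htrans : (ρ.trans S) ⟨i.1, hiN⟩ = S (rFun hkN ⟨i.1, hiN⟩) := rfl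
        rcases hsub with ⟨hlt, hval⟩ | ⟨heqm, hval⟩
        · have h8 : rFun hkN ⟨i.1, hiN⟩ = ⟨pFun k (m+1), lt_trans (pFun_lt hlt) hkN⟩ :=
            Fin.ext hval
          rw [htrans, h8, hSlt (pFun k (m+1)) (pFun_lt hlt) (lt_trans (pFun_lt hlt) hkN)]
          rw [fMap_apply, gEquiv_symm_eq (j := ⟨pFun k (m+1), pFun_lt hlt⟩) hlt rfl]
          rw [hfπ]
          exact (h1 ⟨m, hm⟩ hlt).symm
        · have h8 : rFun hkN ⟨i.1, hiN⟩ = ⟨k, hkN⟩ := Fin.ext hval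
          rw [htrans, h8, hSk, hfπ]
          congr 1
          exact Fin.ext heqm.symm
      · omega
      · omega
    have hperm : permDelta (ρ.trans S) S ≤ 2 :=
      permDelta_trans_le S ρ (fun j => rFun_dist hk hkN j)
    have hmem : permDelta (ρ.trans S) S ∈ {d : ℕ | ∃ π' σ' : Equiv.Perm (Fin N),
        ExtendsP π' (fMap π) ∧ ExtendsP σ' (fMap σ) ∧ permDelta π' σ' = d} :=
      ⟨ρ.trans S, S, hPext, hSext, rfl⟩
    exact le_trans (Nat.sInf_le hmem) hperm

/-- For `1 ≤ k < N`, the restricted uncertainty graph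
`𝒰_{N,2,k}` contains a subgraph isomorphic to the shift graph `𝒮_{N,k}`
(an injective edge-preserving map); consequently `χ(𝒰_{N,2,k}) ≥ χ(𝒮_{N,k})`. -/
theorem shiftGraph_embeds_in_uncGraph (N k : ℕ) (hk : 1 ≤ k) (hkN : k < N) :
    (∃ f : (Fin k ↪ Fin N) → (Fin k ↪ Fin N), Function.Injective f ∧
      ∀ π σ, (shiftGraph N k).Adj π σ → (uncGraph N 2 k).Adj (f π) (f σ)) ∧
    (shiftGraph N k).chromaticNumber ≤ (uncGraph N 2 k).chromaticNumber := by
  have hmap : ∀ π σ : Fin k ↪ Fin N,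
      (shiftGraph N k).Adj π σ → (uncGraph N 2 k).Adj (fMap π) (fMap σ) := by
    rintro π σ (h | h)
    · exact adj_of_leftShift hk hkN h
    · exact ((uncGraph N 2 k).adj_symm (adj_of_leftShift hk hkN h))
  constructor
  · exact ⟨fMap, fMap_injective, hmap⟩
  · apply SimpleGraph.chromaticNumber_le_of_forall_imp
    intro n hc
    obtain ⟨C⟩ := hc
    exact ⟨C.comp ⟨fMap, fun {a b} h => hmap a b h⟩⟩
end
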